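/- The map φ : A^{d-1} → P^{d-1} given by (y_1,…,y_{d-1}) ↦ [1 : y_1 : y_1y_2 : ⋯ : y_1⋯y_{d-1}] restricts to a bijection (isomorphism of varieties) from the open set {δ_d(y_1,…,y_{d-1}) ≠ 0} of affine space onto the Drinfeld space Ω^{d-1}, the complement in P^{d-1} of all F_q-rational hyperplanes. -/

import Mathlib

/-!
A family `v : Fin m → K` is linearly independent over `F_q` iff its Moore matrix `(v_j ^ q ^ k)`
is invertible. An `F_q`-relation `∑ a_j v_j = 0` survives every Frobenius power and so is a left
kernel vector; conversely a right kernel vector `c` gives the `F_q`-linear polynomial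
`∑ c_k X ^ q ^ k`, of degree `< q ^ m`, vanishing on all `q ^ m` elements of the span of `v`.
So `δ_d(y) ≠ 0` says exactly that `z(y) = (1, y_1, y_1 y_2, …)` has independent coordinates.
As this condition is invariant under scaling and forces all coordinates to be nonzero, every point
of `Ω^{d-1}` has exactly one representative with first coordinate `1`, and these representatives
are precisely the `z(y)`, with inverse `y_t = z_t / z_{t-1}`.
-/

open Polynomial FiniteField Matrix
open scoped LinearAlgebra.Projectivization

def mooreMatrix {M : Type*} [Monoid M] (q : ℕ) {m : ℕ} (v : Fin m → M) :
    Matrix (Fin m) (Fin m) M :=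
  Matrix.of fun j k => v j ^ q ^ (k : ℕ)

section LinearizedPoly

variable {R : Type*} [CommSemiring R] {q m : ℕ}

noncomputable def linearizedPoly (q : ℕ) (c : Fin m → R) : R[X] :=
  ∑ k, C (c k) * X ^ q ^ (k : ℕ)

lemma eval_linearizedPoly (c : Fin m → R) (x : R) :
    (linearizedPoly q c).eval x = ∑ k, c k * x ^ q ^ (k : ℕ) := by
  simp [linearizedPoly, eval_finsetSum]

lemma natDegree_linearizedPoly_lt (hq : 1 < q) (c : Fin m → R) :
    (linearizedPoly q c).natDegree < q ^ m := by
  have hdeg : (linearizedPoly q c).natDegree ≤ q ^ m - 1 := by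
    refine natDegree_sum_le_of_forall_le _ _ fun k _ => ?_
    have := Nat.pow_lt_pow_right hq k.isLt
    exact (natDegree_C_mul_X_pow_le _ _).trans (by omega)
  have := Nat.one_le_pow m q (by omega)
  omega

lemma coeff_linearizedPoly_pow (hq : 1 < q) (c : Fin m → R) (k : Fin m) :
    (linearizedPoly q c).coeff (q ^ (k : ℕ)) = c k := by
  simp only [linearizedPoly, finsetSum_coeff, coeff_C_mul_X_pow,
    (Nat.pow_right_injective hq).eq_iff, Fin.val_inj]
  simp

end LinearizedPoly

section Moore

variable {F K : Type*} [Field F] [Fintype F] [Field K] [Algebra F K]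

lemma sum_smul_pow_card_pow {ι : Type*} [Fintype ι] (a : ι → F) (w : ι → K) (k : ℕ) :
    (∑ i, a i • w i) ^ Fintype.card F ^ k = ∑ i, a i • w i ^ Fintype.card F ^ k := by
  have h := map_sum (frobeniusAlgHom F K ^ k) (fun i => a i • w i) Finset.univ
  simp only [map_smul] at h
  rwa [AlgHom.coe_pow, coe_frobeniusAlgHom, pow_iterate] at h

lemma eval_linearizedPoly_card_sum_smul {m : ℕ} (c : Fin m → K) {ι : Type*} [Fintype ι]
    (a : ι → F) (w : ι → K) :
    (linearizedPoly (Fintype.card F) c).eval (∑ i, a i • w i)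
      = ∑ i, a i • (linearizedPoly (Fintype.card F) c).eval (w i) := by
  simp only [eval_linearizedPoly, sum_smul_pow_card_pow, Finset.mul_sum, Finset.smul_sum]
  rw [Finset.sum_comm]
  simp

theorem det_mooreMatrix_ne_zero_iff {m : ℕ} (v : Fin m → K) :
    (mooreMatrix (Fintype.card F) v).det ≠ 0 ↔ LinearIndependent F v := by
  have hq : 1 < Fintype.card F := Fintype.one_lt_card
  constructor
  · intro hdet
    rw [Fintype.linearIndependent_iff]
    intro a ha i
    have hker : (fun j => algebraMap F K (a j)) ᵥ* mooreMatrix (Fintype.card F) v = 0 := by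
      ext k
      have h := sum_smul_pow_card_pow a v k
      rw [ha, zero_pow (by positivity)] at h
      simpa [vecMul, dotProduct, mooreMatrix, Algebra.smul_def] using h.symm
    by_contra hai
    exact hdet (Matrix.exists_vecMul_eq_zero_iff.mp
      ⟨_, fun h => hai (by simpa using congrFun h i), hker⟩)
  · intro hv hdet
    obtain ⟨c, hc, hker⟩ := Matrix.exists_mulVec_eq_zero_iff.mpr hdet
    have hroot : ∀ j, (linearizedPoly (Fintype.card F) c).eval (v j) = 0 := fun j => by
      simpa [eval_linearizedPoly, Matrix.mulVec, dotProduct, mooreMatrix, mul_comm]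
        using congrFun hker j
    have hzero : linearizedPoly (Fintype.card F) c = 0 := by
      refine eq_zero_of_natDegree_lt_card_of_eval_eq_zero _
        hv.fintypeLinearCombination_injective (fun a => ?_) ?_
      · simp [Fintype.linearCombination_apply, eval_linearizedPoly_card_sum_smul, hroot]
      · simpa using natDegree_linearizedPoly_lt hq c
    obtain ⟨k, hk⟩ := Function.ne_iff.mp hc
    exact hk (by simpa [hzero] using (coeff_linearizedPoly_pow hq c k).symm)

end Moore

lemma linearIndependent_group_smul_iff {R M G ι : Type*} [Ring R] [AddCommGroup M]
    [Module R M] [Group G] [DistribMulAction G M] [SMulCommClass G R M] (a : G) (w : ι → M) :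
    LinearIndependent R (a • w) ↔ LinearIndependent R w :=
  (DistribMulAction.toLinearEquiv R M a).toLinearMap.linearIndependent_iff (LinearEquiv.ker _)

section PartialProducts

variable {M : Type*} {m : ℕ}

/-- The paper's `z_j = y_1 ⋯ y_j`, with `y` indexed from `0`. -/
def prodBelow [CommMonoid M] (y : Fin m → M) (j : ℕ) : M :=
  ∏ t ∈ Finset.univ.filter (fun t : Fin m => (t : ℕ) < j), y t

@[simp]
lemma prodBelow_zero [CommMonoid M] (y : Fin m → M) : prodBelow y 0 = 1 := by
  simp [prodBelow]

lemma prodBelow_succ [CommMonoid M] (y : Fin m → M) (i : ℕ) (hi : i < m) :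
    prodBelow y (i + 1) = prodBelow y i * y ⟨i, hi⟩ := by
  have hfilter : Finset.univ.filter (fun t : Fin m => (t : ℕ) < i + 1)
      = insert ⟨i, hi⟩ (Finset.univ.filter (fun t : Fin m => (t : ℕ) < i)) := by
    ext t
    simp only [Order.lt_add_one_iff, Finset.mem_filter, Finset.mem_univ, true_and,
      Finset.mem_insert, Fin.ext_iff]
    omega
  rw [prodBelow, hfilter, Finset.prod_insert (by simp), mul_comm, prodBelow]

lemma eq_of_prodBelow_eq [CommMonoidWithZero M] [IsLeftCancelMulZero M] {y y' : Fin m → M}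
    (h : ∀ j ≤ m, prodBelow y j = prodBelow y' j) (hy : ∀ t : Fin m, prodBelow y t ≠ 0) :
    y = y' := by
  funext t
  have hsucc := h (t + 1) t.isLt
  rw [prodBelow_succ y t t.isLt, prodBelow_succ y' t t.isLt, h t t.isLt.le] at hsucc
  exact mul_left_cancel₀ (h t t.isLt.le ▸ hy t) hsucc

def successiveRatios [Div M] {d : ℕ} (u : Fin d → M) (t : Fin (d - 1)) : M :=
  u ⟨t + 1, by omega⟩ / u ⟨t, by omega⟩

lemma prodBelow_successiveRatios [CommGroupWithZero M] {d : ℕ} (u : Fin d → M)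
    (hu : ∀ j, u j ≠ 0) (j : Fin d) :
    prodBelow (successiveRatios u) j = u j / u ⟨0, j.pos⟩ := by
  obtain ⟨j, hj⟩ := j
  induction j with
  | zero => simp [hu]
  | succ i ih =>
    rw [prodBelow_succ _ i (by omega), ih (by omega), successiveRatios]
    field_simp [hu]

end PartialProducts

section AffineChart

variable {K : Type*} [Field K] {d : ℕ}

lemma prodBelow_fun_ne_zero (hd : 0 < d) (y : Fin (d - 1) → K) :
    (fun j : Fin d => prodBelow y j) ≠ 0 := fun h => by
  simpa using congrFun h ⟨0, hd⟩

def affineChart (hd : 0 < d) (y : Fin (d - 1) → K) : ℙ K (Fin d → K) :=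
  Projectivization.mk K (fun j => prodBelow y j) (prodBelow_fun_ne_zero hd y)

theorem bijOn_affineChart (hd : 0 < d) {S : Set (Fin d → K)}
    (hS : ∀ (a : Kˣ) (v : Fin d → K), a • v ∈ S ↔ v ∈ S) (hS0 : ∀ v ∈ S, ∀ j, v j ≠ 0) :
    Set.BijOn (affineChart hd) {y | (fun j : Fin d => prodBelow y j) ∈ S} {P | P.rep ∈ S} := by
  refine ⟨fun y hy => ?_, fun y hy y' _ hyy' => ?_, fun P hP => ?_⟩
  · obtain ⟨a, ha⟩ := Projectivization.exists_smul_eq_mk_rep K _ (prodBelow_fun_ne_zero hd y)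
    change (Projectivization.mk K _ _).rep ∈ S
    exact ha ▸ (hS a _).2 hy
  · obtain ⟨a, ha⟩ := (Projectivization.mk_eq_mk_iff K _ _ _ _).mp hyy'
    have ha1 : a = 1 := Units.ext (by simpa [Units.smul_def] using congrFun ha ⟨0, hd⟩)
    rw [ha1, one_smul] at ha
    exact eq_of_prodBelow_eq (fun j hj => (congrFun ha ⟨j, by omega⟩).symm)
      fun t => hS0 _ hy ⟨t, by omega⟩
  · set u := P.rep
    have hu := hS0 u hP
    have hz : (fun j : Fin d => prodBelow (successiveRatios u) j)
        = Units.mk0 (u ⟨0, hd⟩)⁻¹ (inv_ne_zero (hu _)) • u := by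
      funext j
      simp [prodBelow_successiveRatios u hu, div_eq_inv_mul]
    refine ⟨successiveRatios u, (hz ▸ (hS _ u).2 hP :), ?_⟩
    rw [← Projectivization.mk_rep P, affineChart, Projectivization.mk_eq_mk_iff]
    exact ⟨_, hz.symm⟩

end AffineChart

/-- **The affine chart of Drinfeld space.**  The map
`φ : (y_1,…,y_{d-1}) ↦ [1 : y_1 : y_1y_2 : ⋯ : y_1⋯y_{d-1}]` restricts to a bijection
from the open set `{δ_d(y) ≠ 0}` of affine space (where
`δ_d(y) = det((z_j^{q^k}))^{q-1}`, `z_j = y_1⋯y_j`) onto the Drinfeld space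
`Ω^{d-1} ⊂ ℙ^{d-1}`, the set of points whose homogeneous coordinates are linearly
independent over `F_q`. -/
theorem affine_chart_bijOn_drinfeld
    (p n d : ℕ) [Fact p.Prime] (hn : 0 < n) (hd : 0 < d)
    (K : Type*) [Field K] [Algebra (GaloisField p n) K] :
    Set.BijOn
      (fun y : Fin (d - 1) → K =>
        Projectivization.mk K
          (fun j : Fin d => ∏ t ∈ Finset.univ.filter (fun t : Fin (d-1) => (t : ℕ) < (j : ℕ)), y t)
          (by
            intro h
            have h0 := congrFun h ⟨0, hd⟩
            simp at h0))
      {y : Fin (d - 1) → K |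
        (Matrix.det (Matrix.of fun j k : Fin d =>
          (∏ t ∈ Finset.univ.filter (fun t : Fin (d-1) => (t : ℕ) < (j : ℕ)), y t)
            ^ (p ^ n) ^ (k : ℕ))) ^ (p ^ n - 1) ≠ 0}
      {P : ℙ K (Fin d → K) | LinearIndependent (GaloisField p n) P.rep} := by
  have : Fintype (GaloisField p n) := Fintype.ofFinite _
  have hq : Fintype.card (GaloisField p n) = p ^ n := by
    rw [Fintype.card_eq_nat_card, GaloisField.card p n hn.ne']
  have hq1 : p ^ n - 1 ≠ 0 := by
    have := Nat.one_lt_pow hn.ne' (Fact.out : p.Prime).one_lt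
    omega
  have hdomain : {y : Fin (d - 1) → K |
      (mooreMatrix (p ^ n) fun j : Fin d => prodBelow y j).det ^ (p ^ n - 1) ≠ 0}
      = {y | (fun j : Fin d => prodBelow y j) ∈ {v | LinearIndependent (GaloisField p n) v}} := by
    ext y
    exact (pow_ne_zero_iff hq1).trans (hq ▸ det_mooreMatrix_ne_zero_iff _)
  exact hdomain ▸ bijOn_affineChart hd (fun a v => linearIndependent_group_smul_iff a v)
    fun v hv j => hv.ne_zero j
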